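/- Computing the maximum weight common subsequence of k strings of length n over alphabet Σ with weights w: Σ → {1,...,K} reduces to computing the k-LCS of k strings of length at most K·n: replacing each symbol ℓ in each string by w(ℓ) consecutive copies of ℓ makes the length of the longest common subsequence of the k resulting strings equal to the maximum total weight of a common subsequence of the k original strings. -/

import Mathlib

/-!
A common subsequence `z` of the strings `P i` blows up to a common subsequence of the
blown-up strings of length `∑ w(z)`. Conversely, shrink a common subsequence `u` of the
blown-up strings by replacing every maximal run of `m` copies of `c` by `⌈m / w c⌉` copies
(`unblow`). The result depends on `u` alone, has weight at least `|u|`, and is a subsequence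
of every `s` with `u <+ blow w s`: the part of `u` matched inside the block `c ^ (w c)` coming
from one letter `c` of `s` has at most `w c` letters, so it adds at most one copy of `c` to the
shrunken run.
-/

/-- Length of a longest common subsequence of `k` lists. -/
noncomputable def klcs {k : ℕ} {α : Type*} (P : Fin k → List α) : ℕ :=
  sSup {n | ∃ z : List α, (∀ i, z.Sublist (P i)) ∧ z.length = n}

/-- Maximum total weight of a common subsequence of `k` lists. -/
noncomputable def kwlcs {k : ℕ} {α : Type*} (w : α → ℕ) (P : Fin k → List α) : ℕ :=
  sSup {n | ∃ z : List α, (∀ i, z.Sublist (P i)) ∧ (z.map w).sum = n}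

/-- The blow-up map: each symbol `c` is replaced by `w c` consecutive copies of `c`. -/
def blow {α : Type*} (w : α → ℕ) (s : List α) : List α :=
  (s.map fun c => List.replicate (w c) c).flatten

section Blow

variable {α : Type*} (w : α → ℕ)

@[simp]
lemma blow_nil : blow w ([] : List α) = [] := rfl

@[simp]
lemma blow_cons (c : α) (s : List α) :
    blow w (c :: s) = List.replicate (w c) c ++ blow w s := rfl

@[simp]
lemma length_blow (s : List α) : (blow w s).length = (s.map w).sum := by
  induction s with
  | nil => rfl
  | cons c s ih => simp [ih]

lemma length_blow_le_mul {K : ℕ} (hK : ∀ c, w c ≤ K) (s : List α) :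
    (blow w s).length ≤ K * s.length := by
  rw [length_blow, mul_comm, ← smul_eq_mul, ← List.length_map (f := w)]
  exact List.sum_le_card_nsmul _ _ fun _ hn => by
    obtain ⟨c, -, rfl⟩ := List.mem_map.1 hn
    exact hK c

lemma blow_sublist_blow {z s : List α} (h : z.Sublist s) : (blow w z).Sublist (blow w s) := by
  induction h with
  | slnil => rfl
  | cons c _ ih => exact ih.trans (List.sublist_append_right _ _)
  | cons_cons c _ ih => exact ih.append_left _

end Blow

section Unblow

variable {α : Type*} [DecidableEq α] (w : α → ℕ)

def unblow : List α → List α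
  | [] => []
  | c :: u =>
      List.replicate (((u.takeWhile (· == c)).length + 1) ⌈/⌉ w c) c
        ++ unblow (u.dropWhile (· == c))
termination_by u => u.length
decreasing_by exact Nat.lt_succ_of_le (List.dropWhile_sublist _).length_le

lemma exists_eq_replicate_append (c : α) (u : List α) :
    ∃ a v, (∀ x ∈ v.head?, x ≠ c) ∧ u = List.replicate a c ++ v := by
  induction u with
  | nil => exact ⟨0, [], by simp⟩
  | cons x u ih =>
    by_cases hx : x = c
    · obtain ⟨a, v, hv, rfl⟩ := ih
      exact ⟨a + 1, v, hv, by simp [hx, List.replicate_succ]⟩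
    · exact ⟨0, x :: u, by simpa using hx, rfl⟩

lemma unblow_replicate_append (c : α) (a : ℕ) {v : List α} (hv : ∀ x ∈ v.head?, x ≠ c) :
    unblow w (List.replicate a c ++ v) = List.replicate (a ⌈/⌉ w c) c ++ unblow w v := by
  have hv' : v.takeWhile (· == c) = [] ∧ v.dropWhile (· == c) = v := by
    cases v with
    | nil => simp
    | cons x v => simpa using hv
  cases a with
  | zero => simp
  | succ a => simp [List.replicate_succ, unblow, hv']

lemma length_le_sum_map_unblow (hw : ∀ c, 0 < w c) (u : List α) :
    u.length ≤ ((unblow w u).map w).sum := by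
  induction u using unblow.induct with
  | case1 => simp [unblow]
  | case2 c u ih =>
    have hsplit := congrArg List.length (List.takeWhile_append_dropWhile (p := (· == c)) (l := u))
    have hrun := le_smul_ceilDiv (b := (u.takeWhile (· == c)).length + 1) (hw c)
    rw [unblow]
    simp only [List.map_append, List.map_replicate, List.sum_append, List.sum_replicate,
      smul_eq_mul, List.length_cons, List.length_append] at hsplit hrun ⊢
    rw [mul_comm] at hrun
    omega

lemma ceilDiv_add_le_succ {m W : ℕ} (hW : 0 < W) (hm : m ≤ W) (a : ℕ) :
    (m + a) ⌈/⌉ W ≤ a ⌈/⌉ W + 1 := by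
  rw [ceilDiv_le_iff_le_mul hW, mul_add_one]
  have := le_smul_ceilDiv (b := a) hW
  rw [smul_eq_mul] at this
  omega

lemma unblow_replicate_append_sublist {c : α} (hc : 0 < w c) {m : ℕ} (hm : m ≤ w c)
    (u : List α) : (unblow w (List.replicate m c ++ u)).Sublist (c :: unblow w u) := by
  obtain ⟨a, v, hv, rfl⟩ := exists_eq_replicate_append c u
  rw [← List.append_assoc, ← List.replicate_add, unblow_replicate_append w c _ hv,
    unblow_replicate_append w c _ hv, ← List.cons_append, ← List.replicate_succ]
  exact (List.replicate_sublist_replicate c).2 (ceilDiv_add_le_succ hc hm a) |>.append_right _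

lemma unblow_sublist_of_sublist_blow (hw : ∀ c, 0 < w c) {u s : List α}
    (h : u.Sublist (blow w s)) : (unblow w u).Sublist s := by
  induction s generalizing u with
  | nil => simp_all [unblow]
  | cons c s ih =>
    obtain ⟨_, u₂, rfl, h₁, h₂⟩ := List.sublist_append_iff.1 (blow_cons w c s ▸ h)
    obtain ⟨m, hm, rfl⟩ := List.sublist_replicate_iff.1 h₁
    exact (unblow_replicate_append_sublist w (hw c) hm u₂).trans ((ih h₂).cons_cons c)

end Unblow

/-- computing a maximum-weight common subsequence of `k` strings
(weights in `{1,…,K}`) reduces to the unweighted `k`-LCS of the blown-up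
strings, which have length at most `K·n`: the `k`-LCS of the blow-ups equals
the `k`-WLCS of the originals. -/
theorem kwlcs_eq_klcs_blow {k : ℕ} {α : Type*} (K : ℕ) (w : α → ℕ)
    (hw : ∀ c : α, 1 ≤ w c ∧ w c ≤ K) (P : Fin k → List α) :
    (∀ i, (blow w (P i)).length ≤ K * (P i).length) ∧
    klcs (fun i => blow w (P i)) = kwlcs w P := by
  classical
  obtain ⟨hpos, hK⟩ := forall_and.1 hw
  refine ⟨fun i => length_blow_le_mul w hK (P i), csSup_eq_csSup_of_forall_exists_le ?_ ?_⟩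
  · rintro _ ⟨u, hu, rfl⟩
    exact ⟨_, ⟨unblow w u, fun i => unblow_sublist_of_sublist_blow w hpos (hu i), rfl⟩,
      length_le_sum_map_unblow w hpos u⟩
  · rintro _ ⟨z, hz, rfl⟩
    exact ⟨_, ⟨blow w z, fun i => blow_sublist_blow w (hz i), rfl⟩, (length_blow w z).ge⟩
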